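/- Let Q(λ,u) = 4(λ+2)²(λu+u−1)²(1+u)²(1+λ)²(λu+1+u)²λ². Let (λ_s)_{s∈S} be a family of elements of k with λ_s = λ_t whenever s and t are conjugate in W. If Q(λ_s, u_s) is invertible in k for every s ∈ S, then C_W(u) is generated as a unital k-algebra by the elements g_s + λ_s g_s e_s, s ∈ S (the images of the Artin generators under the morphism s ↦ g_s + λ_s g_s e_s). -/

import Mathlib

open scoped Classical

noncomputable section

namespace CWpaper

variable {B : Type} {M : CoxeterMatrix B} {W : Type} [Group W] (cs : CoxeterSystem M W)
variable (k : Type) [CommRing k]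

/-- The set of reflections of the Coxeter system, as a subtype. -/
abbrev Refl := {t : W // cs.IsReflection t}

/-- Index type for the generators of `C_W(u)`: `inl i` indexes `g` generators,
`inr t` indexes `e` generators. -/
abbrev Gen := B ⊕ Refl cs

/-- The free-algebra generator corresponding to `g_s`. -/
def gf (i : B) : FreeAlgebra k (Gen cs) := FreeAlgebra.ι k (Sum.inl i)

/-- The free-algebra generator corresponding to `e_t`. -/
def ef (t : Refl cs) : FreeAlgebra k (Gen cs) := FreeAlgebra.ι k (Sum.inr t)

/-- A simple reflection, as a reflection. -/
def simpleR (i : B) : Refl cs := ⟨cs.simple i, cs.isReflection_simple i⟩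

/-- Conjugate of a reflection by a group element. -/
def conjR (w : W) (t : Refl cs) : Refl cs := ⟨w * t.1 * w⁻¹, t.2.conj w⟩

/-- The defining relations of the algebra `C_W(u)`. -/
inductive CWrel (u : B → k) : FreeAlgebra k (Gen cs) → FreeAlgebra k (Gen cs) → Prop
  | braid (i j : B) (h : M i j ≠ 0) :
      CWrel u (((CoxeterSystem.alternatingWord i j (M i j)).map (gf cs k)).prod)
              (((CoxeterSystem.alternatingWord j i (M i j)).map (gf cs k)).prod)
  | idem (t : Refl cs) : CWrel u (ef cs k t * ef cs k t) (ef cs k t)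
  | comm (t₁ t₂ : Refl cs) : CWrel u (ef cs k t₁ * ef cs k t₂) (ef cs k t₂ * ef cs k t₁)
  | conj (t t₁ : Refl cs) :
      CWrel u (ef cs k t * ef cs k t₁) (ef cs k t * ef cs k (conjR cs t.1 t₁))
  | move (i : B) (t : Refl cs) :
      CWrel u (gf cs k i * ef cs k t) (ef cs k (conjR cs (cs.simple i) t) * gf cs k i)
  | quad (i : B) :
      CWrel u (gf cs k i * gf cs k i)
        (1 + algebraMap k _ (u i - 1) * ef cs k (simpleR cs i) * (1 + gf cs k i))

variable (u : B → k)

/-- The algebra `C_W(u)`. -/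
abbrev CW := RingQuot (CWrel cs k u)

/-- The generator `g_s` of `C_W(u)`. -/
def gCW (i : B) : CW cs k u := RingQuot.mkAlgHom k (CWrel cs k u) (gf cs k i)

/-- The generator `e_t` of `C_W(u)`. -/
def eCW (t : Refl cs) : CW cs k u := RingQuot.mkAlgHom k (CWrel cs k u) (ef cs k t)

theorem eCW_commute (t₁ t₂ : Refl cs) : Commute (eCW cs k u t₁) (eCW cs k u t₂) := by
  have h := RingQuot.mkAlgHom_rel k (CWrel.comm (cs := cs) (k := k) (u := u) t₁ t₂)
  have h' : eCW cs k u t₁ * eCW cs k u t₂ = eCW cs k u t₂ * eCW cs k u t₁ := by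
    simpa only [map_mul, eCW] using h
  exact h'

/-- The product `e_J = ∏_{t ∈ J} e_t` for a finite set of reflections `J`. -/
def eJ (J : Finset (Refl cs)) : CW cs k u :=
  J.noncommProd (eCW cs k u) (fun t₁ _ t₂ _ _ => eCW_commute cs k u t₁ t₂)

/-- `gg : W → C_W(u)` is the family `(g_w)_{w ∈ W}` iff for every reduced word
`l` for `w`, `gg w` is the product of the `g_s`, `s ∈ l`. -/
def IsGFamily (gg : W → CW cs k u) : Prop :=
  ∀ l : List B, cs.IsReduced l → gg (cs.wordProd l) = (l.map (gCW cs k u)).prod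

end CWpaper

/-! Let `A` be the subalgebra generated by the `X_s = g_s + λ_s g_s e_s`. As `e_s` is an idempotent
commuting with `g_s`, the elements `X_s² - 1` and `X_s³ - X_s` are combinations of `e_s` and
`e_s g_s` whose determinant `λ(1+λ)(λ+2)(λu+u-1)(λu+u+1)` divides `Q(λ_s, u_s)`; inverting it puts
`e_s`, `e_s g_s`, and hence `g_s = X_s - λ_s e_s g_s`, in `A`. Finally
`e_{sts} = g_s e_t g_s - (u_s - 1) e_s e_t (1 + g_s)` propagates membership from the `e_s` to
all `e_t`. -/

theorem Submodule.mem_of_isUnit_det {k M : Type*} [CommRing k] [AddCommGroup M] [Module k M]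
    (N : Submodule k M) {x y : M} {a b c d : k} (h₁ : a • x + b • y ∈ N)
    (h₂ : c • x + d • y ∈ N) (hdet : IsUnit (a * d - b * c)) : x ∈ N ∧ y ∈ N := by
  have hx : (a * d - b * c) • x = d • (a • x + b • y) - b • (c • x + d • y) := by module
  have hy : (a * d - b * c) • y = a • (c • x + d • y) - c • (a • x + b • y) := by module
  constructor
  · rw [← N.smul_mem_iff_of_isUnit hdet, hx]
    exact N.sub_mem (N.smul_mem _ h₁) (N.smul_mem _ h₂)
  · rw [← N.smul_mem_iff_of_isUnit hdet, hy]
    exact N.sub_mem (N.smul_mem _ h₂) (N.smul_mem _ h₁)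

/-- The relations satisfied by `E = e_s` and `G = g_s` in `C_W(u)`, with `v = u_s`. -/
structure IsQuadraticPair {k R : Type*} [CommRing k] [Ring R] [Algebra k R] (v : k) (E G : R) :
    Prop where
  idem : E * E = E
  comm : G * E = E * G
  sq : G * G = 1 + (v - 1) • E + (v - 1) • (E * G)

namespace IsQuadraticPair

variable {k R : Type*} [CommRing k] [Ring R] [Algebra k R] {v : k} {E G : R}

theorem mul_mul_self (h : IsQuadraticPair v E G) :
    E * (G * G) = v • E + (v - 1) • (E * G) := by
  rw [h.sq]
  simp only [mul_add, mul_one, mul_smul_comm, ← mul_assoc, h.idem]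
  module

theorem mul_self_mul_mul_self (h : IsQuadraticPair v E G) :
    E * G * (E * G) = E * (G * G) := by
  rw [mul_assoc, ← mul_assoc G, h.comm, mul_assoc, ← mul_assoc, h.idem]

theorem add_smul_mul_sq_sub_one (h : IsQuadraticPair v E G) (l : k) :
    (G + l • (E * G)) * (G + l • (E * G)) - 1
      = (v - 1 + (2 * l + l ^ 2) * v) • E + ((v - 1) * (1 + l) ^ 2) • (E * G) := by
  have hGEG : G * (E * G) = E * (G * G) := by rw [← mul_assoc, h.comm, mul_assoc]
  simp only [add_mul, mul_add, smul_mul_assoc, mul_smul_comm, hGEG, h.mul_self_mul_mul_self,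
    mul_assoc E G G]
  rw [h.mul_mul_self, h.sq]
  module

theorem add_smul_mul_cube_sub_self (h : IsQuadraticPair v E G) (l : k) :
    (G + l • (E * G)) * (G + l • (E * G)) * (G + l • (E * G)) - (G + l • (E * G))
      = ((1 + l) * ((v - 1) * (1 + l) ^ 2) * v) • E
        + ((1 + l) * (v - 1 + (2 * l + l ^ 2) * v + (v - 1) * (1 + l) ^ 2 * (v - 1)))
          • (E * G) := by
  have hE : E * (G + l • (E * G)) = (1 + l) • (E * G) := by
    rw [mul_add, mul_smul_comm, ← mul_assoc, h.idem]
    module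
  have hEG : E * G * (G + l • (E * G)) = (1 + l) • (v • E + (v - 1) • (E * G)) := by
    rw [mul_add, mul_smul_comm, h.mul_self_mul_mul_self, mul_assoc, h.mul_mul_self]
    module
  rw [← sub_one_mul, h.add_smul_mul_sq_sub_one, add_mul, smul_mul_assoc, smul_mul_assoc, hE, hEG]
  module

theorem mem_of_add_smul_mul_mem (h : IsQuadraticPair v E G) {l : k} {A : Subalgebra k R}
    (hdet : IsUnit (l * (1 + l) * (l + 2) * (l * v + v - 1) * (l * v + v + 1)))
    (hX : G + l • (G * E) ∈ A) : E ∈ A ∧ G ∈ A := by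
  rw [h.comm] at hX
  have hX2 := A.sub_mem (A.mul_mem hX hX) A.one_mem
  have hX3 := A.sub_mem (A.mul_mem (A.mul_mem hX hX) hX) hX
  rw [h.add_smul_mul_sq_sub_one] at hX2
  rw [h.add_smul_mul_cube_sub_self] at hX3
  obtain ⟨hE, hEG⟩ := Submodule.mem_of_isUnit_det (Subalgebra.toSubmodule A) hX2 hX3
    (by convert hdet using 1; ring)
  refine ⟨hE, ?_⟩
  simpa using A.sub_mem hX (A.smul_mem hEG l)

end IsQuadraticPair

namespace CWpaper

section Relations

variable {B : Type} {M : CoxeterMatrix B} {W : Type} [Group W] (cs : CoxeterSystem M W)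

@[simp]
theorem conjR_one (t : Refl cs) : conjR cs 1 t = t := by
  ext; simp [conjR]

theorem conjR_mul (w w' : W) (t : Refl cs) :
    conjR cs (w * w') t = conjR cs w (conjR cs w' t) := by
  ext; simp [conjR, mul_assoc]

theorem conjR_simple_simpleR (i : B) : conjR cs (cs.simple i) (simpleR cs i) = simpleR cs i := by
  ext; simp [conjR, simpleR]

theorem exists_eq_conjR_simpleR (t : Refl cs) : ∃ w i, t = conjR cs w (simpleR cs i) := by
  obtain ⟨w, i, h⟩ := t.2
  exact ⟨w, i, Subtype.ext h⟩

variable (k : Type) [CommRing k] (u : B → k)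

theorem eCW_mul_self (t : Refl cs) : eCW cs k u t * eCW cs k u t = eCW cs k u t := by
  simpa only [map_mul, eCW] using RingQuot.mkAlgHom_rel k (CWrel.idem (u := u) t)

theorem eCW_mul_eCW_conjR (t t₁ : Refl cs) :
    eCW cs k u t * eCW cs k u (conjR cs t.1 t₁) = eCW cs k u t * eCW cs k u t₁ := by
  simpa only [map_mul, eCW] using (RingQuot.mkAlgHom_rel k (CWrel.conj (u := u) t t₁)).symm

theorem gCW_mul_eCW (i : B) (t : Refl cs) :
    gCW cs k u i * eCW cs k u t = eCW cs k u (conjR cs (cs.simple i) t) * gCW cs k u i := by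
  simpa only [map_mul, gCW, eCW] using RingQuot.mkAlgHom_rel k (CWrel.move (u := u) i t)

theorem gCW_mul_self (i : B) :
    gCW cs k u i * gCW cs k u i
      = 1 + (u i - 1) • eCW cs k u (simpleR cs i)
          + (u i - 1) • (eCW cs k u (simpleR cs i) * gCW cs k u i) := by
  have h := RingQuot.mkAlgHom_rel k (CWrel.quad (cs := cs) (u := u) i)
  simp only [map_mul, map_add, map_one, AlgHom.commutes] at h
  simp only [gCW, eCW, h, ← Algebra.smul_def, mul_add, mul_one, smul_mul_assoc, add_assoc]

theorem isQuadraticPair_eCW_gCW (i : B) :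
    IsQuadraticPair (u i) (eCW cs k u (simpleR cs i)) (gCW cs k u i) where
  idem := eCW_mul_self cs k u _
  comm := by rw [gCW_mul_eCW, conjR_simple_simpleR]
  sq := gCW_mul_self cs k u i

theorem eCW_conjR_simple (i : B) (t : Refl cs) :
    eCW cs k u (conjR cs (cs.simple i) t)
      = gCW cs k u i * eCW cs k u t * gCW cs k u i
        - (u i - 1) • (eCW cs k u (simpleR cs i) * eCW cs k u t)
        - (u i - 1) • (eCW cs k u (simpleR cs i) * eCW cs k u t * gCW cs k u i) := by
  have hss : eCW cs k u (simpleR cs i) * eCW cs k u (conjR cs (cs.simple i) t)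
      = eCW cs k u (simpleR cs i) * eCW cs k u t :=
    eCW_mul_eCW_conjR cs k u (simpleR cs i) t
  rw [gCW_mul_eCW, mul_assoc, gCW_mul_self]
  simp only [mul_add, mul_one, mul_smul_comm, ← mul_assoc]
  rw [(eCW_commute cs k u _ _).eq, hss]
  abel

theorem eq_top_of_gCW_mem_of_eCW_mem {A : Subalgebra k (CW cs k u)}
    (hg : ∀ i, gCW cs k u i ∈ A) (he : ∀ t, eCW cs k u t ∈ A) : A = ⊤ := by
  rw [eq_top_iff]
  rintro z -
  obtain ⟨p, rfl⟩ := RingQuot.mkAlgHom_surjective k (CWrel cs k u) z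
  induction p using FreeAlgebra.induction with
  | grade0 r => simpa only [AlgHom.commutes] using A.algebraMap_mem r
  | grade1 x => cases x with
    | inl i => exact hg i
    | inr t => exact he t
  | mul a b ha hb => simpa only [map_mul] using A.mul_mem ha hb
  | add a b ha hb => simpa only [map_add] using A.add_mem ha hb

theorem eCW_mem_of_simple_mem {A : Subalgebra k (CW cs k u)} (hg : ∀ i, gCW cs k u i ∈ A)
    (he : ∀ i, eCW cs k u (simpleR cs i) ∈ A) (t : Refl cs) : eCW cs k u t ∈ A := by
  obtain ⟨w, i, rfl⟩ := exists_eq_conjR_simpleR cs t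
  induction w using cs.simple_induction_left generalizing i with
  | one => simpa using he i
  | mul_simple_left w j ih =>
    rw [conjR_mul, eCW_conjR_simple]
    have hw := ih i
    exact A.sub_mem (A.sub_mem (A.mul_mem (A.mul_mem (hg j) hw) (hg j))
      (A.smul_mem (A.mul_mem (he j) hw) _)) (A.smul_mem (A.mul_mem (A.mul_mem (he j) hw) (hg j)) _)

end Relations

theorem statement15_general {B : Type} {M : CoxeterMatrix B} {W : Type} [Group W]
    (cs : CoxeterSystem M W) (k : Type) [CommRing k] (u : B → k)
    (lam : B → k)
    (hQ : ∀ i : B, IsUnit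
      (4 * (lam i + 2) ^ 2 * (lam i * u i + u i - 1) ^ 2 * (1 + u i) ^ 2 *
        (1 + lam i) ^ 2 * (lam i * u i + 1 + u i) ^ 2 * lam i ^ 2)) :
    Algebra.adjoin k
      (Set.range fun i : B =>
        gCW cs k u i + lam i • (gCW cs k u i * eCW cs k u (simpleR cs i))) = ⊤ := by
  set A := Algebra.adjoin k
    (Set.range fun i : B => gCW cs k u i + lam i • (gCW cs k u i * eCW cs k u (simpleR cs i)))
  have hsimple (i : B) : eCW cs k u (simpleR cs i) ∈ A ∧ gCW cs k u i ∈ A := by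
    set l := lam i
    set v := u i
    have hdet : IsUnit (l * (1 + l) * (l + 2) * (l * v + v - 1) * (l * v + v + 1)) := by
      refine isUnit_of_mul_isUnit_left (y := (l * (1 + l) * (l + 2) * (l * v + v - 1) *
        (l * v + v + 1)) * (4 * (1 + v) ^ 2)) ?_
      convert hQ i using 1
      ring
    exact (isQuadraticPair_eCW_gCW cs k u i).mem_of_add_smul_mul_mem hdet
      (Algebra.subset_adjoin ⟨i, rfl⟩)
  have hg (i : B) : gCW cs k u i ∈ A := (hsimple i).2
  exact eq_top_of_gCW_mem_of_eCW_mem cs k u hg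
    (eCW_mem_of_simple_mem cs k u hg fun i => (hsimple i).1)

/-- **Statement 15.** With `Q(λ,u) = 4(λ+2)²(λu+u−1)²(1+u)²(1+λ)²(λu+1+u)²λ²`, if
`Q(λ_s, u_s)` is invertible in `k` for all `s ∈ S`, then `C_W(u)` is generated as a
unital `k`-algebra by the elements `g_s + λ_s g_s e_s`, `s ∈ S`. -/
theorem statement15 {B : Type} {M : CoxeterMatrix B} {W : Type} [Group W]
    (cs : CoxeterSystem M W) (k : Type) [CommRing k] (u : B → k)
    (hu : ∀ i j : B, IsConj (cs.simple i) (cs.simple j) → u i = u j)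
    (lam : B → k)
    (hlamconj : ∀ i j : B, IsConj (cs.simple i) (cs.simple j) → lam i = lam j)
    (hQ : ∀ i : B, IsUnit
      (4 * (lam i + 2) ^ 2 * (lam i * u i + u i - 1) ^ 2 * (1 + u i) ^ 2 *
        (1 + lam i) ^ 2 * (lam i * u i + 1 + u i) ^ 2 * lam i ^ 2)) :
    Algebra.adjoin k
      (Set.range fun i : B =>
        gCW cs k u i + lam i • (gCW cs k u i * eCW cs k u (simpleR cs i))) = ⊤ :=
  statement15_general cs k u lam hQ

end CWpaper
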